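/- arXiv:1304.2276 — 6 statements merged into one kernel-verified Lean document; each statement's English description precedes it below -/
import Mathlib

section
/- Let s, r ≥ 1 and q ≥ 0 be integers. Suppose A ∈ ℝ^{s×s}, U ∈ ℝ^{s×r}, c ∈ ℝ^s and q_0,…,q_q ∈ ℝ^r satisfy the stage-order conditions c^k − k·A c^{k−1} − k!·U q_k = 0 for k = 0,1,…,q, and suppose α, β ∈ ℝ^{s×s} satisfy the interpolation order conditions α(c−e)^ℓ + β c^ℓ = c^ℓ for ℓ = 0,1,…,q−1. Define the block matrices A^exp = [[0, 0],[Aα, Aβ]] ∈ ℝ^{2s×2s}, U^exp = [[I_s, 0],[0, U]] ∈ ℝ^{2s×(s+r)}, the abscissa vector c^exp = ((c−e)ᵀ, cᵀ)ᵀ ∈ ℝ^{2s}, and the vectors q_k^exp = (((c−e)^k/k!)ᵀ, q_kᵀ)ᵀ ∈ ℝ^{s+r} for k = 0,…,q. Then the stage-order conditions hold for the block method: (c^exp)^k − k·A^exp (c^exp)^{k−1} − k!·U^exp q_k^exp = 0 for k = 0,1,…,q. -/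
/-!
In the block method the first `s` stages simply reproduce the shifted abscissae `c - e` through
`U^exp = I`, so their stage-order residual vanishes identically. The last `s` stages have
coefficient `A α` on `(c - e)^(k-1)` and `A β` on `c^(k-1)`; the interpolation condition of order
`k - 1` collapses `α (c - e)^(k-1) + β c^(k-1)` to `c^(k-1)`, leaving exactly the stage-order
residual of the underlying method.
-/

open Matrix Nat

section StageOrder

variable {R m n : Type*}

/-- At `k = 0` the truncated `k - 1` is harmless because that term carries the factor `k`. -/
def stageResidual [Ring R] [Fintype m] [Fintype n] (A : Matrix m m R) (U : Matrix m n R)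
    (c : m → R) (qk : n → R) (k : ℕ) : m → R :=
  (fun i => c i ^ k) - (k : R) • A *ᵥ (fun i => c i ^ (k - 1)) - (k ! : R) • U *ᵥ qk

theorem sum_elim_pow [Monoid R] (u : m → R) (v : n → R) (k : ℕ) :
    (fun i => Sum.elim u v i ^ k) = Sum.elim (fun j => u j ^ k) (fun j => v j ^ k) := by
  ext (i | i) <;> rfl

theorem stageResidual_fromBlocks [Ring R] [Fintype m] [Fintype n] [DecidableEq m]
    (A α β : Matrix m m R) (U : Matrix m n R) (d c p : m → R) (qk : n → R) (k : ℕ) :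
    stageResidual (fromBlocks 0 0 (A * α) (A * β)) (fromBlocks 1 0 0 U) (Sum.elim d c)
        (Sum.elim p qk) k =
      Sum.elim ((fun j => d j ^ k) - (k ! : R) • p)
        ((fun j => c j ^ k)
          - (k : R) • A *ᵥ (α *ᵥ (fun j => d j ^ (k - 1)) + β *ᵥ (fun j => c j ^ (k - 1)))
          - (k ! : R) • U *ᵥ qk) := by
  simp only [stageResidual, sum_elim_pow, fromBlocks_mulVec, Sum.elim_comp_inl,
    Sum.elim_comp_inr, zero_mulVec, one_mulVec, zero_add, add_zero, mulVec_add, mulVec_mulVec]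
  ext (i | i) <;> simp [mul_add]

theorem pow_sub_factorial_smul_pow_div_factorial [Field R] [CharZero R] (d : m → R)
    (k : ℕ) : (fun j => d j ^ k) - (k ! : R) • (fun j => d j ^ k / (k ! : R)) = 0 := by
  have hfac : (k ! : R) ≠ 0 := by exact_mod_cast k.factorial_ne_zero
  ext j
  simp [mul_div_cancel₀ _ hfac]

end StageOrder

theorem stmt0_general (s r q : ℕ)
    (A : Matrix (Fin s) (Fin s) ℝ) (U : Matrix (Fin s) (Fin r) ℝ)
    (c : Fin s → ℝ) (qv : ℕ → Fin r → ℝ)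
    (α β : Matrix (Fin s) (Fin s) ℝ)
    (hstage : ∀ k, k ≤ q →
      (fun i => c i ^ k) - (k : ℝ) • A.mulVec (fun i => c i ^ (k - 1))
        - (k.factorial : ℝ) • U.mulVec (qv k) = 0)
    (hinterp : ∀ ℓ, ℓ < q →
      α.mulVec (fun i => (c i - 1) ^ ℓ) + β.mulVec (fun i => c i ^ ℓ)
        = fun i => c i ^ ℓ) :
    ∀ k, k ≤ q →
      (fun i => (Sum.elim (fun j => c j - 1) c i) ^ k)
        - (k : ℝ) • (Matrix.fromBlocks 0 0 (A * α) (A * β)).mulVec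
            (fun i => (Sum.elim (fun j => c j - 1) c i) ^ (k - 1))
        - (k.factorial : ℝ) • (Matrix.fromBlocks (1 : Matrix (Fin s) (Fin s) ℝ) 0 0 U).mulVec
            (Sum.elim (fun j => (c j - 1) ^ k / (k.factorial : ℝ)) (qv k)) = 0 := by
  intro k hk
  have hlower :
      (k : ℝ) • A *ᵥ (α *ᵥ (fun j => (c j - 1) ^ (k - 1)) + β *ᵥ (fun j => c j ^ (k - 1)))
        = (k : ℝ) • A *ᵥ (fun j => c j ^ (k - 1)) := by
    rcases Nat.eq_zero_or_pos k with rfl | hk_pos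
    · simp
    · rw [hinterp (k - 1) (by omega)]
  change stageResidual _ _ _ _ k = 0
  rw [stageResidual_fromBlocks, hlower, pow_sub_factorial_smul_pow_div_factorial,
    hstage k hk, Sum.elim_zero_zero]

/-- If the underlying GLM coefficients `(A, U, c, q_k)` satisfy the
stage-order conditions up to order `q`, and the interpolation matrices `α, β`
satisfy the interpolation order conditions for `ℓ = 0, …, q-1`, then the
block (extrapolation-based explicit) method satisfies the stage-order
conditions up to order `q`. -/
theorem stmt0 (s r q : ℕ) (hs : 1 ≤ s) (hr : 1 ≤ r)
    (A : Matrix (Fin s) (Fin s) ℝ) (U : Matrix (Fin s) (Fin r) ℝ)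
    (c : Fin s → ℝ) (qv : ℕ → Fin r → ℝ)
    (α β : Matrix (Fin s) (Fin s) ℝ)
    (hstage : ∀ k, k ≤ q →
      (fun i => c i ^ k) - (k : ℝ) • A.mulVec (fun i => c i ^ (k - 1))
        - (k.factorial : ℝ) • U.mulVec (qv k) = 0)
    (hinterp : ∀ ℓ, ℓ < q →
      α.mulVec (fun i => (c i - 1) ^ ℓ) + β.mulVec (fun i => c i ^ ℓ)
        = fun i => c i ^ ℓ) :
    ∀ k, k ≤ q →
      (fun i => (Sum.elim (fun j => c j - 1) c i) ^ k)
        - (k : ℝ) • (Matrix.fromBlocks 0 0 (A * α) (A * β)).mulVec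
            (fun i => (Sum.elim (fun j => c j - 1) c i) ^ (k - 1))
        - (k.factorial : ℝ) • (Matrix.fromBlocks (1 : Matrix (Fin s) (Fin s) ℝ) 0 0 U).mulVec
            (Sum.elim (fun j => (c j - 1) ^ k / (k.factorial : ℝ)) (qv k)) = 0 :=
  stmt0_general s r q A U c qv α β hstage hinterp
end

section
/- Let s, r ≥ 1 and p ≥ 0 be integers. Suppose A ∈ ℝ^{s×s}, U ∈ ℝ^{s×r}, B ∈ ℝ^{r×s}, V ∈ ℝ^{r×r}, c ∈ ℝ^s and q_0,…,q_p ∈ ℝ^r satisfy the stage-order conditions c^k − k·A c^{k−1} − k!·U q_k = 0 for k = 0,1,…,p and the order conditions Σ_{ℓ=0}^{k} (k!/ℓ!)·q_{k−ℓ} − k·B c^{k−1} − k!·V q_k = 0 for k = 0,1,…,p. Define the implicit block method A^imp = [[0, 0],[0, A]] ∈ ℝ^{2s×2s}, U^imp = [[I_s, 0],[0, U]] ∈ ℝ^{2s×(s+r)}, B^imp = [[0, A],[0, B]] ∈ ℝ^{(s+r)×2s}, V^imp = [[0, U],[0, V]] ∈ ℝ^{(s+r)×(s+r)}, c^imp =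 ((c−e)ᵀ, cᵀ)ᵀ ∈ ℝ^{2s}, and q_k^imp = (((c−e)^k/k!)ᵀ, q_kᵀ)ᵀ ∈ ℝ^{s+r}. Then the block method satisfies the stage-order conditions (c^imp)^k − k·A^imp (c^imp)^{k−1} − k!·U^imp q_k^imp = 0 for k = 0,1,…,p, and the order conditions Σ_{ℓ=0}^{k} (k!/ℓ!)·q_{k−ℓ}^imp − k·B^imp (c^imp)^{k−1} − k!·V^imp q_k^imp = 0 for k = 0,1,…,p. -/
open Matrix

/-! Both families of conditions split along the two blocks. The first block of stages only copies
the incoming values `(c - e)^k / k!` and the second block repeats the underlying method, so three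
of the four block identities are immediate or are the hypotheses themselves. The remaining one,
the first block of the order conditions, becomes the stage-order condition of the underlying
method once the binomial theorem rewrites `∑ (k!/ℓ!) (c - e)^(k-ℓ) / (k-ℓ)!` as `c^k`. -/

theorem sum_factorial_div_mul_sub_one_pow_div_factorial {K : Type*} [Field K] [CharZero K]
    (x : K) (k : ℕ) :
    ∑ ℓ ∈ Finset.range (k + 1),
      (k.factorial : K) / ℓ.factorial * ((x - 1) ^ (k - ℓ) / (k - ℓ).factorial) = x ^ k := by
  conv_rhs => rw [← sub_add_cancel x 1, add_pow, ← Finset.sum_range_reflect]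
  refine Finset.sum_congr rfl fun ℓ hℓ => ?_
  have hℓk : ℓ ≤ k := Nat.lt_succ_iff.mp (Finset.mem_range.mp hℓ)
  rw [Nat.add_sub_cancel, Nat.sub_sub_self hℓk, one_pow, mul_one, Nat.choose_symm hℓk,
    Nat.cast_choose K hℓk]
  field_simp

theorem stmt2_general (s r p : ℕ)
    (A : Matrix (Fin s) (Fin s) ℝ) (U : Matrix (Fin s) (Fin r) ℝ)
    (B : Matrix (Fin r) (Fin s) ℝ) (V : Matrix (Fin r) (Fin r) ℝ)
    (c : Fin s → ℝ) (qv : ℕ → Fin r → ℝ)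
    (hstage : ∀ k, k ≤ p →
      (fun i => c i ^ k) - (k : ℝ) • A.mulVec (fun i => c i ^ (k - 1))
        - (k.factorial : ℝ) • U.mulVec (qv k) = 0)
    (hord : ∀ k, k ≤ p →
      (∑ ℓ ∈ Finset.range (k + 1), ((k.factorial : ℝ) / (ℓ.factorial : ℝ)) • qv (k - ℓ))
        - (k : ℝ) • B.mulVec (fun i => c i ^ (k - 1))
        - (k.factorial : ℝ) • V.mulVec (qv k) = 0) :
    (∀ k, k ≤ p →
      (fun i => (Sum.elim (fun j => c j - 1) c i) ^ k)
        - (k : ℝ) • (Matrix.fromBlocks 0 0 0 A).mulVec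
            (fun i => (Sum.elim (fun j => c j - 1) c i) ^ (k - 1))
        - (k.factorial : ℝ) • (Matrix.fromBlocks (1 : Matrix (Fin s) (Fin s) ℝ) 0 0 U).mulVec
            (Sum.elim (fun j => (c j - 1) ^ k / (k.factorial : ℝ)) (qv k)) = 0) ∧
    (∀ k, k ≤ p →
      (∑ ℓ ∈ Finset.range (k + 1), ((k.factorial : ℝ) / (ℓ.factorial : ℝ)) •
          Sum.elim (fun j => (c j - 1) ^ (k - ℓ) / ((k - ℓ).factorial : ℝ)) (qv (k - ℓ)))
        - (k : ℝ) • (Matrix.fromBlocks 0 A 0 B).mulVec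
            (fun i => (Sum.elim (fun j => c j - 1) c i) ^ (k - 1))
        - (k.factorial : ℝ) • (Matrix.fromBlocks 0 U 0 V).mulVec
            (Sum.elim (fun j => (c j - 1) ^ k / (k.factorial : ℝ)) (qv k)) = 0) := by
  refine ⟨fun k hk => ?_, fun k hk => ?_⟩ <;> ext (j | j)
  · have hk! : (k.factorial : ℝ) ≠ 0 := Nat.cast_ne_zero.mpr k.factorial_ne_zero
    simp [fromBlocks_mulVec, mul_div_cancel₀ _ hk!]
  · simpa [fromBlocks_mulVec, Function.comp_def] using congrFun (hstage k hk) j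
  · simpa [fromBlocks_mulVec, Function.comp_def,
      sum_factorial_div_mul_sub_one_pow_div_factorial] using congrFun (hstage k hk) j
  · simpa [fromBlocks_mulVec, Function.comp_def] using congrFun (hord k hk) j

/-- If the underlying GLM `(A, U, B, V, c, q_k)` satisfies the
stage-order and order conditions up to order `p`, then the implicit block
method (the implicit part of the extrapolation-based IMEX GLM written as a
GLM over two steps) satisfies the stage-order and order conditions up to
order `p`. -/
theorem stmt2 (s r p : ℕ) (hs : 1 ≤ s) (hr : 1 ≤ r)
    (A : Matrix (Fin s) (Fin s) ℝ) (U : Matrix (Fin s) (Fin r) ℝ)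
    (B : Matrix (Fin r) (Fin s) ℝ) (V : Matrix (Fin r) (Fin r) ℝ)
    (c : Fin s → ℝ) (qv : ℕ → Fin r → ℝ)
    (hstage : ∀ k, k ≤ p →
      (fun i => c i ^ k) - (k : ℝ) • A.mulVec (fun i => c i ^ (k - 1))
        - (k.factorial : ℝ) • U.mulVec (qv k) = 0)
    (hord : ∀ k, k ≤ p →
      (∑ ℓ ∈ Finset.range (k + 1), ((k.factorial : ℝ) / (ℓ.factorial : ℝ)) • qv (k - ℓ))
        - (k : ℝ) • B.mulVec (fun i => c i ^ (k - 1))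
        - (k.factorial : ℝ) • V.mulVec (qv k) = 0) :
    (∀ k, k ≤ p →
      (fun i => (Sum.elim (fun j => c j - 1) c i) ^ k)
        - (k : ℝ) • (Matrix.fromBlocks 0 0 0 A).mulVec
            (fun i => (Sum.elim (fun j => c j - 1) c i) ^ (k - 1))
        - (k.factorial : ℝ) • (Matrix.fromBlocks (1 : Matrix (Fin s) (Fin s) ℝ) 0 0 U).mulVec
            (Sum.elim (fun j => (c j - 1) ^ k / (k.factorial : ℝ)) (qv k)) = 0) ∧
    (∀ k, k ≤ p →
      (∑ ℓ ∈ Finset.range (k + 1), ((k.factorial : ℝ) / (ℓ.factorial : ℝ)) •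
          Sum.elim (fun j => (c j - 1) ^ (k - ℓ) / ((k - ℓ).factorial : ℝ)) (qv (k - ℓ)))
        - (k : ℝ) • (Matrix.fromBlocks 0 A 0 B).mulVec
            (fun i => (Sum.elim (fun j => c j - 1) c i) ^ (k - 1))
        - (k.factorial : ℝ) • (Matrix.fromBlocks 0 U 0 V).mulVec
            (Sum.elim (fun j => (c j - 1) ^ k / (k.factorial : ℝ)) (qv k)) = 0) :=
  stmt2_general s r p A U B V c qv hstage hord
end

section
/- Let s ≥ 1 and p ≥ 1 be integers, c ∈ ℝ^s, and α, β ∈ ℝ^{s×s} with β strictly lower triangular satisfy the interpolation order conditions Σ_{k=1}^{s} α_{jk}(c_k−1)^ℓ = c_j^ℓ − Σ_{k=1}^{j−1} β_{jk} c_k^ℓ for ℓ = 0,1,…,p−1 and j = 1,…,s. Let φ: ℝ → ℝ be p-times continuously differentiable and t ∈ ℝ. Then for each j = 1,…,s, the extrapolation error h ↦ φ(t + c_j h) − Σ_{k=1}^{s} α_{jk} φ(t + (c_k−1)h) − Σ_{k=1}^{j−1} β_{jk} φ(t + c_k h) is O(h^p) as h → 0. -/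
/-!
The extrapolation error is a combination `∑ aᵢ φ(t + dᵢ h)` whose moments `∑ aᵢ dᵢ^ℓ` vanish for
`ℓ < p`: this is what the interpolation order conditions say. Such a combination is `O(h^p)`, by
induction on `p`. Differentiating `h ↦ ∑ aᵢ φ(t + dᵢ h)` gives the same kind of combination for
`φ'` with weights `aᵢ dᵢ`, whose moments of order `< p - 1` are the moments of order `1, …, p - 1`
of `a`; the moment of order `0` makes the combination vanish at `h = 0`, and the mean value
inequality then gains one power of `h`.
-/

open Asymptotics Topology

theorem isBigO_pow_succ_of_hasDerivAt {E : Type*} [NormedAddCommGroup E] [NormedSpace ℝ E]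
    {F G : ℝ → E} {p : ℕ} (hF0 : F 0 = 0) (hF : ∀ x, HasDerivAt F (G x) x)
    (hG : G =O[𝓝 0] fun h => h ^ p) :
    F =O[𝓝 0] fun h => h ^ (p + 1) := by
  obtain ⟨C, hC, hGC⟩ := hG.exists_nonneg
  obtain ⟨ε, hε, hGε⟩ := Metric.eventually_nhds_iff.mp hGC.bound
  refine isBigO_iff.mpr ⟨C, Metric.eventually_nhds_iff.mpr ⟨ε, hε, fun {h} hh => ?_⟩⟩
  have hG_ball : ∀ y ∈ Metric.closedBall (0 : ℝ) |h|, ‖G y‖ ≤ C * |h| ^ p := by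
    intro y hy
    rw [Metric.mem_closedBall, Real.dist_0_eq_abs] at hy
    calc ‖G y‖ ≤ C * ‖y ^ p‖ := hGε (by rw [Real.dist_0_eq_abs] at hh ⊢; exact hy.trans_lt hh)
      _ ≤ C * |h| ^ p := by
        rw [norm_pow, Real.norm_eq_abs]
        gcongr
  have hmvt := (convex_closedBall (0 : ℝ) |h|).norm_image_sub_le_of_norm_hasDerivWithin_le
    (fun x _ => (hF x).hasDerivWithinAt) hG_ball
    (Metric.mem_closedBall_self (abs_nonneg h)) (show h ∈ Metric.closedBall 0 |h| by simp)
  rw [hF0, sub_zero, sub_zero, Real.norm_eq_abs] at hmvt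
  calc ‖F h‖ ≤ C * |h| ^ p * |h| := hmvt
    _ = C * ‖h ^ (p + 1)‖ := by rw [norm_pow, Real.norm_eq_abs]; ring

theorem isBigO_sum_smul_comp_of_moments_eq_zero {ι E : Type*} [Fintype ι]
    [NormedAddCommGroup E] [NormedSpace ℝ E] {p : ℕ} {a d : ι → ℝ} {φ : ℝ → E}
    (hφ : ContDiff ℝ p φ) (hmoments : ∀ ℓ < p, ∑ i, a i * d i ^ ℓ = 0) (t : ℝ) :
    (fun h : ℝ => ∑ i, a i • φ (t + d i * h)) =O[𝓝 0] fun h => h ^ p := by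
  induction p generalizing a φ with
  | zero =>
    simp only [pow_zero]
    exact (by fun_prop : Continuous fun h : ℝ => ∑ i, a i • φ (t + d i * h)).tendsto 0
      |>.isBigO_one ℝ
  | succ p ih =>
    rw [Nat.cast_add_one, contDiff_succ_iff_deriv] at hφ
    obtain ⟨hdiff, -, hφ'⟩ := hφ
    have hvanish : ∑ i, a i • φ (t + d i * 0) = 0 := by
      simpa [← Finset.sum_smul] using congrArg (· • φ t) (hmoments 0 p.succ_pos)
    have hderiv : ∀ x : ℝ, HasDerivAt (fun h : ℝ => ∑ i, a i • φ (t + d i * h))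
        (∑ i, (a i * d i) • deriv φ (t + d i * x)) x := by
      intro x
      refine HasDerivAt.fun_sum fun i _ => ?_
      have hinner : HasDerivAt (fun h : ℝ => t + d i * h) (d i) x := by
        simpa using ((hasDerivAt_id x).const_mul (d i)).const_add t
      have hcomp := ((hdiff _).hasDerivAt.scomp x hinner).const_smul (a i)
      rwa [smul_smul] at hcomp
    refine isBigO_pow_succ_of_hasDerivAt hvanish hderiv (ih hφ' fun ℓ hℓ => ?_)
    simpa [mul_assoc, pow_succ'] using hmoments (ℓ + 1) (by omega)

theorem stmt3_general (s p : ℕ) (c : Fin s → ℝ)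
    (α β : Matrix (Fin s) (Fin s) ℝ)
    (hinterp : ∀ ℓ, ℓ < p → ∀ j : Fin s,
      ∑ k, α j k * (c k - 1) ^ ℓ
        = c j ^ ℓ - ∑ k ∈ Finset.univ.filter (fun k => k < j), β j k * c k ^ ℓ)
    (φ : ℝ → ℝ) (hφ : ContDiff ℝ p φ) (t : ℝ) :
    ∀ j : Fin s,
      (fun h : ℝ =>
          φ (t + c j * h) - ∑ k, α j k * φ (t + (c k - 1) * h)
            - ∑ k ∈ Finset.univ.filter (fun k => k < j), β j k * φ (t + c k * h))
        =O[nhds (0 : ℝ)] (fun h : ℝ => h ^ p) := by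
  intro j
  let a : Option (Fin s ⊕ Fin s) → ℝ
    | none => 1
    | some (.inl k) => -α j k
    | some (.inr k) => -if k < j then β j k else 0
  let d : Option (Fin s ⊕ Fin s) → ℝ
    | none => c j
    | some (.inl k) => c k - 1
    | some (.inr k) => c k
  have hexpand : ∀ f : ℝ → ℝ, ∑ i, a i * f (d i) = f (c j) - ∑ k, α j k * f (c k - 1)
      - ∑ k ∈ Finset.univ.filter (fun k => k < j), β j k * f (c k) := by
    intro f
    simp only [a, d, Fintype.sum_option, Fintype.sum_sum_type, Finset.sum_filter, ite_mul,
      neg_mul, zero_mul, one_mul, Finset.sum_neg_distrib]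
    ring
  have hmoments : ∀ ℓ < p, ∑ i, a i * d i ^ ℓ = 0 := fun ℓ hℓ => by
    rw [hexpand (· ^ ℓ), hinterp ℓ hℓ j]
    ring
  refine (isBigO_sum_smul_comp_of_moments_eq_zero hφ hmoments t).congr_left fun h => ?_
  simpa only [smul_eq_mul] using hexpand fun x => φ (t + x * h)

/-- If the extrapolation coefficients `α, β` (with `β` strictly
lower triangular) satisfy the interpolation order conditions of order `p`,
then for every `p`-times continuously differentiable function `φ` the
extrapolation error at each abscissa is `O(h^p)` as `h → 0`. -/
theorem stmt3 (s p : ℕ) (hs : 1 ≤ s) (hp : 1 ≤ p) (c : Fin s → ℝ)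
    (α β : Matrix (Fin s) (Fin s) ℝ)
    (hβ : ∀ j k : Fin s, j ≤ k → β j k = 0)
    (hinterp : ∀ ℓ, ℓ < p → ∀ j : Fin s,
      ∑ k, α j k * (c k - 1) ^ ℓ
        = c j ^ ℓ - ∑ k ∈ Finset.univ.filter (fun k => k < j), β j k * c k ^ ℓ)
    (φ : ℝ → ℝ) (hφ : ContDiff ℝ p φ) (t : ℝ) :
    ∀ j : Fin s,
      (fun h : ℝ =>
          φ (t + c j * h) - ∑ k, α j k * φ (t + (c k - 1) * h)
            - ∑ k ∈ Finset.univ.filter (fun k => k < j), β j k * φ (t + c k * h))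
        =O[nhds (0 : ℝ)] (fun h : ℝ => h ^ p) :=
  stmt3_general s p c α β hinterp φ hφ t
end

section
/- Let c = (0, 1/3, 2/3, 1) ∈ ℝ⁴, β₂₁, β₃₁, β₃₂, β₄₁, β₄₂, β₄₃ ∈ ℝ, and let β be the strictly lower triangular matrix with these entries below the diagonal. Then the unique matrix α ∈ ℝ^{4×4} satisfying Σ_{k=1}^{4} α_{jk}(c_k−1)^ℓ = c_j^ℓ − Σ_{k=1}^{j−1} β_{jk} c_k^ℓ for ℓ = 0,1,2,3 and j = 1,…,4 is α = [[0, 0, 0, 1],[−1, 4, −6, 4−β₂₁],[β₃₂−4, 15−4β₃₂, 2(3β₃₂−10), 10−β₃₁−4β₃₂],[β₄₂+4β₄₃−10, 36−4β₄₂−15β₄₃, 6β₄₂+20β₄₃−45, 20−β₄₁−4β₄₂−10β₄₃]]. -/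
/-!
For each row `j`, the conditions say that the row vector `α j` times the Vandermonde matrix of the
nodes `c k - 1` equals a vector depending only on `c` and `β`. The nodes are pairwise distinct, so
that Vandermonde matrix is invertible and each row of `α` is determined; the displayed matrix is
then checked to satisfy the conditions by direct computation.
-/

open Matrix

/-- The interpolation order conditions in the square case `p = s`. -/
def InterpolationOrderConditions {R : Type*} [CommRing R] {s : ℕ} (c : Fin s → R)
    (β α : Matrix (Fin s) (Fin s) R) : Prop :=
  ∀ ℓ, ℓ < s → ∀ j : Fin s,
    ∑ k, α j k * (c k - 1) ^ ℓ = c j ^ ℓ - ∑ k ∈ Finset.univ.filter (fun k => k < j), β j k * c k ^ ℓ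

theorem eq_of_forall_sum_mul_pow_eq {R : Type*} [CommRing R] [IsDomain R] {n : ℕ}
    {x a b : Fin n → R} (hx : Function.Injective x)
    (h : ∀ ℓ, ℓ < n → ∑ k, a k * x k ^ ℓ = ∑ k, b k * x k ^ ℓ) : a = b := by
  have hV : (a - b) ᵥ* vandermonde x = 0 := funext fun ℓ => by
    simp [vecMul, dotProduct, vandermonde_apply, sub_mul, h ℓ ℓ.2]
  exact sub_eq_zero.mp (eq_zero_of_vecMul_eq_zero (det_vandermonde_ne_zero_iff.mpr hx) hV)

theorem InterpolationOrderConditions.unique {R : Type*} [CommRing R] [IsDomain R] {s : ℕ}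
    {c : Fin s → R} {β α α' : Matrix (Fin s) (Fin s) R} (hc : Function.Injective c)
    (h : InterpolationOrderConditions c β α) (h' : InterpolationOrderConditions c β α') :
    α = α' :=
  funext fun j => eq_of_forall_sum_mul_pow_eq (sub_left_injective.comp hc)
    fun ℓ hℓ => (h ℓ hℓ j).trans (h' ℓ hℓ j).symm

theorem injective_equispaced_four : Function.Injective (![0, 1/3, 2/3, 1] : Fin 4 → ℝ) := by
  intro i j h
  fin_cases i <;> fin_cases j <;> first | rfl | norm_num at h

theorem interpolationOrderConditions_equispaced_four (b21 b31 b32 b41 b42 b43 : ℝ) :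
    InterpolationOrderConditions ![0, 1/3, 2/3, 1]
      !![0, 0, 0, 0;
         b21, 0, 0, 0;
         b31, b32, 0, 0;
         b41, b42, b43, 0]
      !![0, 0, 0, 1;
         -1, 4, -6, 4 - b21;
         b32 - 4, 15 - 4 * b32, 2 * (3 * b32 - 10), 10 - b31 - 4 * b32;
         b42 + 4 * b43 - 10, 36 - 4 * b42 - 15 * b43,
           6 * b42 + 20 * b43 - 45, 20 - b41 - 4 * b42 - 10 * b43] := by
  intro ℓ hℓ j
  interval_cases ℓ <;> fin_cases j <;>
    simp only [Fin.sum_univ_four, Finset.sum_filter, Fin.isValue, Fin.reduceFinMk, Fin.zero_eta, Fin.mk_one,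
      Fin.reduceLT, lt_self_iff_false, ↓reduceIte, of_apply, cons_val', cons_val_fin_one, cons_val,
      cons_val_zero, cons_val_one] <;> ring

/-- For `c = (0, 1/3, 2/3, 1)` and strictly lower triangular `β`,
the unique matrix `α` satisfying the interpolation order conditions of order
`4` is the explicitly given matrix. -/
theorem stmt7 (b21 b31 b32 b41 b42 b43 : ℝ) (α : Matrix (Fin 4) (Fin 4) ℝ) :
    (∀ ℓ, ℓ < 4 → ∀ j : Fin 4,
        ∑ k, α j k * ((![0, 1/3, 2/3, 1] : Fin 4 → ℝ) k - 1) ^ ℓ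
          = (![0, 1/3, 2/3, 1] : Fin 4 → ℝ) j ^ ℓ
            - ∑ k ∈ Finset.univ.filter (fun k => k < j),
                (!![0, 0, 0, 0;
                    b21, 0, 0, 0;
                    b31, b32, 0, 0;
                    b41, b42, b43, 0] : Matrix (Fin 4) (Fin 4) ℝ) j k
                  * (![0, 1/3, 2/3, 1] : Fin 4 → ℝ) k ^ ℓ)
      ↔ α = !![0, 0, 0, 1;
               -1, 4, -6, 4 - b21;
               b32 - 4, 15 - 4 * b32, 2 * (3 * b32 - 10), 10 - b31 - 4 * b32;
               b42 + 4 * b43 - 10, 36 - 4 * b42 - 15 * b43,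
                 6 * b42 + 20 * b43 - 45, 20 - b41 - 4 * b42 - 10 * b43] := by
  refine ⟨fun h => InterpolationOrderConditions.unique injective_equispaced_four h
    (interpolationOrderConditions_equispaced_four b21 b31 b32 b41 b42 b43), ?_⟩
  rintro rfl
  exact interpolationOrderConditions_equispaced_four b21 b31 b32 b41 b42 b43
end

section
/- For θ = 1, define p(w, z₀, z₁) = (1−z₁)²w² − (1−z₁)(1+z₀)w (the stability polynomial of the IMEX θ-method with θ = 1). Then for every z₀ ∈ ℂ the following are equivalent: (i) for every y ∈ ℝ, every root w ∈ ℂ of the quadratic p(·, z₀, iy) satisfies |w| < 1; (ii) |z₀ + 1| < 1. In other words, the constrained stability region S_{π/2}(1) of the IMEX θ-method with θ = 1 is exactly the open unit disk centered at −1, which coincides with the stability region S_E(1) of its explicit part. -/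
/-! For `y` real the polynomial factors as `a w (a w - (1 + z₀))` with `a = 1 - i y`, so its roots
are `0` and `(1 + z₀) / a`. Since `‖a‖ ≥ |Re a| = 1`, the nonzero root is largest at `y = 0`,
where it equals `1 + z₀`. -/

open Complex

lemma sq_mul_sq_sub_mul_mul_eq_zero_iff {K : Type*} [Field K] {a c w : K} (ha : a ≠ 0) :
    a ^ 2 * w ^ 2 - a * c * w = 0 ↔ w = 0 ∨ a * w = c := by
  have hfactor : a ^ 2 * w ^ 2 - a * c * w = a * (w * (a * w - c)) := by ring
  rw [hfactor, mul_eq_zero, mul_eq_zero, sub_eq_zero]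
  simp only [ha, false_or]

lemma one_le_norm_one_sub_I_mul_ofReal (y : ℝ) : 1 ≤ ‖1 - I * y‖ := by
  simpa using abs_re_le_norm (1 - I * y)

lemma norm_lt_one_of_mul_eq {a w c : ℂ} (ha : 1 ≤ ‖a‖) (hw : a * w = c) (hc : ‖c‖ < 1) :
    ‖w‖ < 1 :=
  calc ‖w‖ ≤ ‖a‖ * ‖w‖ := le_mul_of_one_le_left (norm_nonneg w) ha
    _ = ‖c‖ := by rw [← norm_mul, hw]
    _ < 1 := hc

/-- For the IMEX θ-method with `θ = 1`, with stability polynomial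
`p(w,z₀,z₁) = (1-z₁)²w² - (1-z₁)(1+z₀)w`, the constrained stability region
`S_{π/2}(1)` (all roots of `p(·,z₀,iy)` strictly inside the unit circle for
every real `y`) is exactly the open unit disk centered at `-1`. -/
theorem stmt12 (z₀ : ℂ) :
    (∀ y : ℝ, ∀ w : ℂ,
        (1 - Complex.I * (y : ℂ)) ^ 2 * w ^ 2
          - (1 - Complex.I * (y : ℂ)) * (1 + z₀) * w = 0 →
        ‖w‖ < 1)
      ↔ ‖z₀ + 1‖ < 1 := by
  rw [add_comm z₀]
  constructor
  · intro h
    exact h 0 (1 + z₀) (by push_cast; ring)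
  · intro h y w hw
    have ha : 1 ≤ ‖1 - I * y‖ := one_le_norm_one_sub_I_mul_ofReal y
    rcases (sq_mul_sq_sub_mul_mul_eq_zero_iff (norm_pos_iff.mp (one_pos.trans_le ha))).mp hw
      with rfl | hroot
    · simp
    · exact norm_lt_one_of_mul_eq ha hroot h
end

section
/- For θ = 1/2, define p(w, z₀, z₁) = (1−z₁/2)²w² − (1−z₁/2)(1 + z₀/2 + z₁/2)w − (1/2)z₀(1−z₁/2) (the stability polynomial of the IMEX θ-method with θ = 1/2). Then for every z₀ ∈ ℂ there exist y ∈ ℝ and a root w ∈ ℂ of p(·, z₀, iy) with |w| ≥ 1. In other words, the constrained stability region S_{π/2}(1/2) of the IMEX θ-method with θ = 1/2 is empty. -/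
/-!
For `θ = 1/2` the stability polynomial factors as
`p(w, z₀, z₁) = (1 - z₁/2) * ((w - 1) * w - (w + 1) * (z₁ * w + z₀) / 2)`.
Write `z₀ = i r w` with `r` real and `|w| = 1`, `w ≠ -1`. The Cayley transform maps the unit
circle minus `-1` onto the imaginary axis, so `w - 1 = i t (w + 1)` for some real `t`; then
`z₁ = i (2t - r)` makes the second factor `w * ((w - 1) - i t (w + 1)) = 0`, so `w` is a root
of modulus one.
-/

open Complex

lemma exists_sub_one_eq_I_mul_ofReal_mul_add_one {w : ℂ} (hw : ‖w‖ = 1) (hw₁ : w ≠ -1) :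
    ∃ t : ℝ, w - 1 = I * t * (w + 1) := by
  have hsq : w.re * w.re + w.im * w.im = 1 := by
    rw [← normSq_apply, ← Complex.sq_norm, hw, one_pow]
  have hre : 1 + w.re ≠ 0 := by
    intro h
    refine hw₁ (ext ?_ ?_) <;> simp only [neg_re, neg_im, one_re, one_im, neg_zero] <;> nlinarith
  obtain ⟨t, ht⟩ : ∃ t : ℝ, t * (1 + w.re) = w.im := ⟨w.im / (1 + w.re), div_mul_cancel₀ _ hre⟩
  refine ⟨t, ext ?_ ?_⟩
  · simp only [sub_re, one_re, mul_re, I_re, ofReal_re, zero_mul, I_im, ofReal_im, mul_zero,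
      sub_self, add_re, mul_im, one_mul, zero_add, add_im, one_im, add_zero, zero_sub]
    refine mul_right_cancel₀ hre ?_
    linear_combination w.im * ht + hsq
  · simp only [sub_im, one_im, sub_zero, mul_im, mul_re, I_re, ofReal_re, zero_mul, I_im,
      ofReal_im, mul_zero, sub_self, add_im, add_zero, one_mul, zero_add, add_re, one_re]
    linear_combination -ht

lemma exists_eq_I_mul_ofReal_mul (z : ℂ) :
    ∃ r : ℝ, ∃ w : ℂ, ‖w‖ = 1 ∧ w ≠ -1 ∧ z = I * r * w := by
  rcases eq_or_ne z 0 with rfl | hz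
  · exact ⟨0, 1, by simp, by norm_num, by simp⟩
  have hnorm : (‖z‖ : ℂ) ≠ 0 := by exact_mod_cast norm_ne_zero_iff.mpr hz
  set u := z / (I * ‖z‖) with hu
  have hzu : z = I * ‖z‖ * u := by rw [hu]; field_simp
  by_cases hu₁ : u = -1
  · refine ⟨-‖z‖, 1, by simp, by norm_num, ?_⟩
    push_cast
    linear_combination hzu + I * ‖z‖ * hu₁
  · refine ⟨‖z‖, u, ?_, hu₁, hzu⟩
    simp [hu, hz]

/-- For the IMEX θ-method with `θ = 1/2`, the constrained
stability region `S_{π/2}(1/2)` is empty: for every `z₀` there are `y ∈ ℝ`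
and a root `w` of the stability polynomial `p(·,z₀,iy)` with `|w| ≥ 1`. -/
theorem stmt13 (z₀ : ℂ) :
    ∃ y : ℝ, ∃ w : ℂ,
      (1 - Complex.I * (y : ℂ) / 2) ^ 2 * w ^ 2
        - (1 - Complex.I * (y : ℂ) / 2)
            * (1 + z₀ / 2 + Complex.I * (y : ℂ) / 2) * w
        - (1 / 2) * z₀ * (1 - Complex.I * (y : ℂ) / 2) = 0
      ∧ 1 ≤ ‖w‖ := by
  obtain ⟨r, w, hw, hw₁, rfl⟩ := exists_eq_I_mul_ofReal_mul z₀
  obtain ⟨t, ht⟩ := exists_sub_one_eq_I_mul_ofReal_mul_add_one hw hw₁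
  refine ⟨2 * t - r, w, ?_, hw.ge⟩
  push_cast
  linear_combination (1 - I * (2 * t - r) / 2) * w * ht
end
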